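/- arXiv:2006.14309 — 8 statements merged into one kernel-verified Lean document; each statement's English description precedes it below -/
import Mathlib

section
/- Let G be a finite connected simple graph and let T₁ and T₂ be two spanning trees of G. Then there exists a transformation from T₁ to T₂ such that every tree T of the sequence satisfies in(T) ⊆ in(T₁) ∪ in(T₂). -/
open SimpleGraph

/-- `T` is a spanning tree of `G`: a subgraph of `G` (on the same vertex set)
that is a tree. Being a tree on the whole vertex type, it contains all vertices. -/
def IsSpanningTree {V : Type*} (G T : SimpleGraph V) : Prop :=
  T ≤ G ∧ T.IsTree

/-- `T₁` and `T₂` differ by an edge flip: there are edges `e ∈ E(T₁) \ E(T₂)` and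
`f ∈ E(T₂) \ E(T₁)` with `E(T₂) = (E(T₁) \ {e}) ∪ {f}`. -/
def EdgeFlip {V : Type*} (T₁ T₂ : SimpleGraph V) : Prop :=
  ∃ e ∈ T₁.edgeSet, e ∉ T₂.edgeSet ∧
    ∃ f ∈ T₂.edgeSet, f ∉ T₁.edgeSet ∧ T₂.edgeSet = (T₁.edgeSet \ {e}) ∪ {f}

/-- The internal nodes of `T`: vertices that are not leaves (a leaf has degree one). -/
def internalNodes {V : Type*} (T : SimpleGraph V) : Set V :=
  {v | (T.neighborSet v).ncard ≠ 1}

/-- One step of a transformation keeping property `P`: both trees are spanning trees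
of `G` satisfying `P`, and they differ by an edge flip. -/
def Step {V : Type*} (G : SimpleGraph V) (P : SimpleGraph V → Prop)
    (T₁ T₂ : SimpleGraph V) : Prop :=
  IsSpanningTree G T₁ ∧ IsSpanningTree G T₂ ∧ P T₁ ∧ P T₂ ∧ EdgeFlip T₁ T₂

/-- There is a transformation from `T₁` to `T₂`: a finite sequence of spanning trees of `G`,
all satisfying `P`, starting at `T₁`, ending at `T₂`, consecutive ones differing by an
edge flip. -/
def Transformable {V : Type*} (G : SimpleGraph V) (P : SimpleGraph V → Prop)
    (T₁ T₂ : SimpleGraph V) : Prop :=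
  Relation.ReflTransGen (Step G P) T₁ T₂

/-!
Induct on the number of edges of `T₁` outside `T₂`. Pick such an edge `uv`; deleting it splits
`T₁` into the component `A` of `u` and the rest. The `T₂`-path from `u` to `v` leaves `A`
along some edge `xy`, and `T₁ - uv + xy` is a spanning tree one edge closer to `T₂`. Since
every vertex of a path other than its ends has two path neighbours, `x` and `y` are internal
in `T₂` unless they are `u` or `v`. A leaf of `T₁` at `u` or `v` loses its only edge and gains
at most one, so it stays a leaf; every other vertex outside `{x, y}` keeps its neighbourhood.
-/

lemma notMem_internalNodes_iff {V : Type*} {T : SimpleGraph V} {w : V} :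
    w ∉ internalNodes T ↔ (T.neighborSet w).Nonempty ∧ (T.neighborSet w).Subsingleton := by
  simp [internalNodes, Set.ncard_eq_one, Set.exists_eq_singleton_iff_nonempty_subsingleton]

namespace SimpleGraph

variable {V : Type*}

lemma Reachable.deleteEdges_or {G : SimpleGraph V} {u v w : V} (h : G.Reachable w u) :
    (G.deleteEdges {s(u, v)}).Reachable w u ∨ (G.deleteEdges {s(u, v)}).Reachable w v := by
  classical
  obtain ⟨p, hp⟩ := h.exists_isPath
  by_cases he : s(u, v) ∈ p.edges
  · have hv := p.snd_mem_support_of_mem_edges he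
    have hu := Walk.endpoint_notMem_support_takeUntil hp hv (p.adj_of_mem_edges he).ne
    refine Or.inr ⟨(p.takeUntil v hv).toDeleteEdges _ fun e he' heq => hu ?_⟩
    rw [Set.mem_singleton_iff] at heq
    exact (p.takeUntil v hv).fst_mem_support_of_mem_edges (heq ▸ he')
  · exact Or.inl ⟨p.toDeleteEdges _ fun e he' heq => he (Set.mem_singleton_iff.mp heq ▸ he')⟩

lemma IsTree.deleteEdges_sup_edge {T : SimpleGraph V} (hT : T.IsTree) {u v x y : V}
    (hx : (T.deleteEdges {s(u, v)}).Reachable u x)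
    (hy : ¬ (T.deleteEdges {s(u, v)}).Reachable u y) :
    (T.deleteEdges {s(u, v)} ⊔ edge x y).IsTree := by
  set D := T.deleteEdges {s(u, v)}
  have hle : D ≤ D ⊔ edge x y := le_sup_left
  have hxy : ¬ D.Reachable x y := fun h => hy (hx.trans h)
  have hvy : D.Reachable v y :=
    ((hT.connected.preconnected y u).deleteEdges_or.resolve_left fun h => hy h.symm).symm
  have huv : (D ⊔ edge x y).Reachable u v := by
    have hxy' : (D ⊔ edge x y).Adj x y :=
      Or.inr ((edge_adj x y x y).mpr ⟨Or.inl ⟨rfl, rfl⟩, fun h => hxy (h ▸ .rfl)⟩)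
    exact ((hx.mono hle).trans hxy'.reachable).trans (hvy.symm.mono hle)
  refine ⟨(connected_iff_exists_forall_reachable _).mpr ⟨u, fun w => ?_⟩,
    (hT.isAcyclic.anti (deleteEdges_le _)).sup_edge_of_not_reachable hxy⟩
  rcases (hT.connected.preconnected w u).deleteEdges_or with h | h
  · exact (h.mono hle).symm
  · exact huv.trans (h.mono hle).symm

lemma Walk.IsTrail.exists_adj_boundary {T : SimpleGraph V} {a b : V} {p : T.Walk a b}
    (hp : p.IsTrail) {S : Set V} (ha : a ∈ S) (hb : b ∉ S) :
    ∃ x y, T.Adj x y ∧ x ∈ S ∧ y ∉ S ∧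
      (x = a ∨ x ∈ internalNodes T) ∧ (y = b ∨ y ∈ internalNodes T) := by
  obtain ⟨d, hd, hx, hy⟩ := p.exists_boundary_dart S ha hb
  have interior : ∀ z ∈ p.support, z = a ∨ z = b ∨ z ∈ internalNodes T := by
    intro z hz
    by_contra! h
    exact hp.not_mem_support_of_subsingleton_neighborSet h.1 h.2.1
      (notMem_internalNodes_iff.mp h.2.2).2 hz
  refine ⟨d.fst, d.snd, d.adj, hx, hy, ?_, ?_⟩
  · rcases interior _ (p.dart_fst_mem_support_of_mem_darts hd) with h | h | h
    · exact .inl h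
    · exact absurd (h ▸ hx) hb
    · exact .inr h
  · rcases interior _ (p.dart_snd_mem_support_of_mem_darts hd) with h | h | h
    · exact absurd (h ▸ ha) hy
    · exact .inl h
    · exact .inr h

lemma edgeSet_deleteEdges_sup_edge (T : SimpleGraph V) (e : Sym2 V) {x y : V} (hxy : x ≠ y) :
    (T.deleteEdges {e} ⊔ edge x y).edgeSet = (T.edgeSet \ {e}) ∪ {s(x, y)} := by
  rw [edgeSet_sup, edgeSet_deleteEdges, edgeSet_edge_of_ne hxy]

lemma edgeFlip_deleteEdges_sup_edge {T : SimpleGraph V} {u v x y : V} (huv : T.Adj u v)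
    (hxy : ¬ T.Adj x y) (hne : x ≠ y) : EdgeFlip T (T.deleteEdges {s(u, v)} ⊔ edge x y) := by
  have hef : s(u, v) ≠ s(x, y) := fun h => hxy (by rwa [← mem_edgeSet, ← h])
  rw [EdgeFlip, edgeSet_deleteEdges_sup_edge T _ hne]
  exact ⟨s(u, v), huv, by simp [hef], s(x, y), by simp, hxy, rfl⟩

lemma notMem_internalNodes_deleteEdges_sup_edge {T : SimpleGraph V} {w w' x y : V}
    (hw : T.neighborSet w = {w'})
    (hT' : (T.deleteEdges {s(w, w')} ⊔ edge x y).Preconnected) :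
    w ∉ internalNodes (T.deleteEdges {s(w, w')} ⊔ edge x y) := by
  have hww' : T.Adj w w' := by rw [← mem_neighborSet, hw]; rfl
  have hsub :
      (T.deleteEdges {s(w, w')} ⊔ edge x y).neighborSet w ⊆ (edge x y).neighborSet w := by
    intro z hz
    rw [mem_neighborSet, sup_adj, deleteEdges_adj] at hz
    rcases hz with ⟨hz, hzw⟩ | hz
    · rw [← mem_neighborSet, hw, Set.mem_singleton_iff] at hz
      exact (hzw (hz ▸ rfl)).elim
    · exact hz
  have hedge : ((edge x y).neighborSet w).Subsingleton := by
    intro z₁ h₁ z₂ h₂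
    simp only [mem_neighborSet, edge_adj] at h₁ h₂
    grind
  exact notMem_internalNodes_iff.mpr
    ⟨(hT' w w').nonempty_neighborSet_left hww'.ne, hedge.anti hsub⟩

lemma internalNodes_deleteEdges_sup_edge_subset {T : SimpleGraph V} {u v x y : V}
    (huv : T.Adj u v) (hT' : (T.deleteEdges {s(u, v)} ⊔ edge x y).Preconnected) :
    internalNodes (T.deleteEdges {s(u, v)} ⊔ edge x y) ⊆
      internalNodes T ∪ ({x, y} \ {u, v}) := by
  intro w hw
  by_cases hwuv : w = u ∨ w = v
  · left
    obtain ⟨w', hww', hadj⟩ : ∃ w', T.Adj w w' ∧ s(w, w') = s(u, v) := by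
      rcases hwuv with rfl | rfl
      · exact ⟨v, huv, rfl⟩
      · exact ⟨u, huv.symm, Sym2.eq_swap⟩
    by_contra hleaf
    rw [← hadj] at hw hT'
    exact notMem_internalNodes_deleteEdges_sup_edge
      ((notMem_internalNodes_iff.mp hleaf).2.eq_singleton_of_mem hww') hT' hw
  · by_cases hwxy : w = x ∨ w = y
    · exact .inr ⟨hwxy, hwuv⟩
    · left
      have : (T.deleteEdges {s(u, v)} ⊔ edge x y).neighborSet w = T.neighborSet w := by
        ext z
        simp only [mem_neighborSet, sup_adj, deleteEdges_adj, edge_adj, Set.mem_singleton_iff,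
          Sym2.eq_iff]
        grind
      rwa [internalNodes, Set.mem_ofPred_eq, ← this]

end SimpleGraph

section Transformation

variable {V : Type*} {G : SimpleGraph V}

lemma IsSpanningTree.exists_edgeFlip {T₁ T₂ : SimpleGraph V}
    (h₁ : IsSpanningTree G T₁) (h₂ : IsSpanningTree G T₂) {e : Sym2 V}
    (he : e ∈ T₁.edgeSet \ T₂.edgeSet) :
    ∃ T, IsSpanningTree G T ∧ EdgeFlip T₁ T ∧
      internalNodes T ⊆ internalNodes T₁ ∪ internalNodes T₂ ∧
      T.edgeSet \ T₂.edgeSet = (T₁.edgeSet \ T₂.edgeSet) \ {e} := by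
  induction e using Sym2.ind with | _ u v => ?_
  obtain ⟨huv, huv₂⟩ := he
  set D := T₁.deleteEdges {s(u, v)}
  have hv : ¬ D.Reachable u v :=
    isBridge_iff.mp (isAcyclic_iff_forall_adj_isBridge.mp h₁.2.isAcyclic huv)
  obtain ⟨p, hp⟩ := h₂.2.connected.exists_isPath u v
  obtain ⟨x, y, hxy, hx, hy, hxint, hyint⟩ :=
    hp.isTrail.exists_adj_boundary (S := {w | D.Reachable u w}) .rfl hv
  have hT : (D ⊔ edge x y).IsTree := h₁.2.deleteEdges_sup_edge hx hy
  have hxy₁ : ¬ T₁.Adj x y := by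
    refine fun h => hy (hx.trans (Adj.reachable ((deleteEdges_adj ..).mpr ⟨h, ?_⟩)))
    rintro (heq : s(x, y) = s(u, v))
    exact huv₂ (heq ▸ hxy)
  refine ⟨D ⊔ edge x y, ⟨sup_le ((deleteEdges_le _).trans h₁.1)
      ((edge_le_iff _).mpr (.inr (h₂.1 hxy))), hT⟩,
    edgeFlip_deleteEdges_sup_edge huv hxy₁ hxy.ne, ?_, ?_⟩
  · intro w hw
    rcases internalNodes_deleteEdges_sup_edge_subset huv hT.connected.preconnected hw with
      h | ⟨rfl | rfl, hwuv⟩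
    · exact .inl h
    · exact .inr (hxint.resolve_left fun h => hwuv (.inl h))
    · exact .inr (hyint.resolve_left fun h => hwuv (.inr h))
  · rw [edgeSet_deleteEdges_sup_edge _ _ hxy.ne]
    have : s(x, y) ∈ T₂.edgeSet := hxy
    grind

lemma transformable_of_internalNodes_subset [Finite V] {T₁ T₂ : SimpleGraph V}
    (h₁ : IsSpanningTree G T₁) (h₂ : IsSpanningTree G T₂)
    {I : Set V} (hI₁ : internalNodes T₁ ⊆ I) (hI₂ : internalNodes T₂ ⊆ I) :
    Transformable G (fun T => internalNodes T ⊆ I) T₁ T₂ := by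
  obtain hsub | ⟨e, he⟩ := (T₁.edgeSet \ T₂.edgeSet).eq_empty_or_nonempty
  · have hle : T₁ ≤ T₂ := edgeSet_subset_edgeSet.mp (Set.sdiff_eq_empty.mp hsub)
    rw [(isTree_iff_minimal_connected.mp h₂.2).eq_of_le h₁.2.connected hle]
    exact .refl
  · obtain ⟨T, hT, hflip, hint, hdiff⟩ := h₁.exists_edgeFlip h₂ he
    have hTI : internalNodes T ⊆ I := hint.trans (Set.union_subset hI₁ hI₂)
    exact .head ⟨h₁, hT, hI₁, hTI, hflip⟩
      (transformable_of_internalNodes_subset hT h₂ hTI hI₂)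
termination_by (T₁.edgeSet \ T₂.edgeSet).ncard
decreasing_by
  rw [hdiff]
  exact Set.ncard_sdiff_singleton_lt_of_mem he (Set.toFinite _)

end Transformation

theorem spanning_tree_transformation_internal_union_general
    {V : Type*} [Fintype V] (G : SimpleGraph V)
    (T₁ T₂ : SimpleGraph V)
    (h₁ : IsSpanningTree G T₁) (h₂ : IsSpanningTree G T₂) :
    Transformable G
      (fun T => internalNodes T ⊆ internalNodes T₁ ∪ internalNodes T₂) T₁ T₂ :=
  transformable_of_internalNodes_subset h₁ h₂ Set.subset_union_left Set.subset_union_right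

/-- There is a transformation between any two spanning trees in which every intermediate
tree has its internal nodes contained in `in(T₁) ∪ in(T₂)`. -/
theorem spanning_tree_transformation_internal_union
    {V : Type*} [Fintype V] (G : SimpleGraph V) (hG : G.Connected)
    (T₁ T₂ : SimpleGraph V)
    (h₁ : IsSpanningTree G T₁) (h₂ : IsSpanningTree G T₂) :
    Transformable G
      (fun T => internalNodes T ⊆ internalNodes T₁ ∪ internalNodes T₂) T₁ T₂ :=
  spanning_tree_transformation_internal_union_general G T₁ T₂ h₁ h₂
end

section
/- Let G be a finite connected simple graph on n vertices and let T be a spanning tree of G with exactly two internal nodes u and v, where both u and v have degree at most n − 3 in G. Then T is frozen with respect to the threshold of two internal nodes: every spanning tree T' of G that can be reached from T by a transformation in which every tree of the sequence has at most two internal nodes satisfies in(T') = {u, v}. -/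
open SimpleGraph

/-!
In a tree on `n` vertices whose only internal nodes are `u` and `v`, the degree sum `2(n - 1)`
minus the `n - 2` leaves gives `deg u + deg v = n`. If both degrees in `G` are at most `n - 3`,
each of `u, v` has tree degree at least `3`; an edge flip lowers a degree by at most one, so
after it `u` and `v` are still internal, and with at most two internal nodes allowed they are
the only ones.
-/

section

variable {V : Type*}

lemma SimpleGraph.IsTree.sum_ncard_neighborSet [Fintype V] {S : SimpleGraph V}
    (hS : S.IsTree) : ∑ w, (S.neighborSet w).ncard + 2 = 2 * Fintype.card V := by
  classical
  have hcard := hS.card_edgeFinset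
  simp only [← Nat.card_coe_set_eq, Nat.card_eq_fintype_card, card_neighborSet_eq_degree,
    sum_degrees_eq_twice_card_edges]
  omega

lemma SimpleGraph.IsTree.ncard_neighborSet_add_of_internalNodes_eq_pair [Fintype V]
    {S : SimpleGraph V} (hS : S.IsTree) {u v : V} (huv : u ≠ v)
    (hin : internalNodes S = {u, v}) :
    (S.neighborSet u).ncard + (S.neighborSet v).ncard = Fintype.card V := by
  classical
  have hleaf : ∀ w ∈ (Finset.univ.erase u).erase v, (S.neighborSet w).ncard = 1 := by
    intro w hw
    simp only [Finset.mem_erase, Finset.mem_univ, and_true] at hw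
    by_contra h
    have : w ∈ internalNodes S := h
    simp [hin, hw.1, hw.2] at this
  have hrest := Finset.sum_const_nat hleaf
  rw [Finset.card_erase_of_mem (by simpa using huv.symm),
    Finset.card_erase_of_mem (Finset.mem_univ u), Finset.card_univ] at hrest
  have hsum := hS.sum_ncard_neighborSet
  rw [← Finset.add_sum_erase _ _ (Finset.mem_univ u),
    ← Finset.add_sum_erase _ _ (by simpa using huv.symm : v ∈ Finset.univ.erase u), hrest] at hsum
  have : 2 ≤ Fintype.card V := Fintype.one_lt_card_iff_nontrivial.mpr ⟨u, v, huv⟩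
  omega

lemma EdgeFlip.ncard_neighborSet_le [Finite V] {S S' : SimpleGraph V} (hflip : EdgeFlip S S')
    (x : V) : (S.neighborSet x).ncard ≤ (S'.neighborSet x).ncard + 1 := by
  obtain ⟨e, -, -, f, -, -, hedges⟩ := hflip
  have hlost : ∀ w ∈ S.neighborSet x \ S'.neighborSet x, s(x, w) = e := by
    rintro w ⟨hw, hw'⟩
    by_contra hne
    exact hw' (show s(x, w) ∈ S'.edgeSet from hedges ▸ Or.inl ⟨hw, hne⟩)
  have : (S.neighborSet x \ S'.neighborSet x).ncard ≤ 1 :=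
    (Set.ncard_le_one_iff).2 fun ha hb => Sym2.congr_right.1 ((hlost _ ha).trans (hlost _ hb).symm)
  have := Set.ncard_le_ncard_sdiff_add_ncard (S.neighborSet x) (S'.neighborSet x)
  omega

lemma internalNodes_eq_pair_of_edgeFlip [Fintype V] {G S S' : SimpleGraph V}
    (hS : IsSpanningTree G S) (hflip : EdgeFlip S S') (hS' : (internalNodes S').ncard ≤ 2)
    {u v : V} (huv : u ≠ v) (hin : internalNodes S = {u, v})
    (hu : (G.neighborSet u).ncard ≤ Fintype.card V - 3)
    (hv : (G.neighborSet v).ncard ≤ Fintype.card V - 3) :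
    internalNodes S' = {u, v} := by
  have hsum := hS.2.ncard_neighborSet_add_of_internalNodes_eq_pair huv hin
  have hle : ∀ x, (S.neighborSet x).ncard ≤ (G.neighborSet x).ncard := fun x =>
    Set.ncard_le_ncard (neighborSet_mono hS.1 x)
  have hinternal : ∀ x, 3 ≤ (S.neighborSet x).ncard → x ∈ internalNodes S' := fun x hx h => by
    have := hflip.ncard_neighborSet_le x
    omega
  have := hle u
  have := hle v
  have : 0 < Fintype.card V := Fintype.card_pos_iff.2 ⟨u⟩
  have hpair : {u, v} ⊆ internalNodes S' :=
    Set.insert_subset (hinternal u (by omega)) (Set.singleton_subset_iff.2 (hinternal v (by omega)))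
  refine (Set.eq_of_subset_of_ncard_le hpair ?_).symm
  rwa [Set.ncard_pair huv]

end

theorem two_internal_nodes_frozen_general
    {V : Type*} [Fintype V] (G : SimpleGraph V)
    (T : SimpleGraph V)
    (u v : V) (huv : u ≠ v)
    (hin : internalNodes T = {u, v})
    (hu : (G.neighborSet u).ncard ≤ Fintype.card V - 3)
    (hv : (G.neighborSet v).ncard ≤ Fintype.card V - 3)
    (T' : SimpleGraph V)
    (hreach : Transformable G (fun S => (internalNodes S).ncard ≤ 2) T T') :
    internalNodes T' = {u, v} := by
  induction hreach with
  | refl => exact hin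
  | tail _ hstep ih =>
    obtain ⟨hS, -, -, hS', hflip⟩ := hstep
    exact internalNodes_eq_pair_of_edgeFlip hS hflip hS' huv ih hu hv

/-- If a spanning tree `T` has exactly two internal nodes `u, v`, both of degree at most
`n - 3` in `G`, then `T` is frozen: every spanning tree reachable from `T` by a
transformation in which every tree has at most two internal nodes has internal
nodes exactly `{u, v}`. -/
theorem two_internal_nodes_frozen
    {V : Type*} [Fintype V] (G : SimpleGraph V) (hG : G.Connected)
    (T : SimpleGraph V) (hT : IsSpanningTree G T)
    (u v : V) (huv : u ≠ v)
    (hin : internalNodes T = {u, v})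
    (hu : (G.neighborSet u).ncard ≤ Fintype.card V - 3)
    (hv : (G.neighborSet v).ncard ≤ Fintype.card V - 3)
    (T' : SimpleGraph V)
    (hreach : Transformable G (fun S => (internalNodes S).ncard ≤ 2) T T') :
    internalNodes T' = {u, v} :=
  two_internal_nodes_frozen_general G T u v huv hin hu hv T' hreach
end

section
/- Let G be a finite connected simple graph on n vertices and let u be a pivot vertex of G, i.e. deg_G(u) ≥ n − 2. Then any two spanning trees T and T' of G, each having at most two internal nodes and each having u as an internal node, are connected by a transformation in which every tree of the sequence has at most two internal nodes. -/
open SimpleGraph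

/-!
A spanning tree with at most two internal nodes, one of them `u`, is a double star: `u` and a
second centre `v` are adjacent and every other vertex is a leaf at `u` or at `v`. Flipping the
leaves of `v` that are `G`-adjacent to `u` over to `u`, one at a time, reaches the double star
whose `v`-leaves are exactly the non-neighbours of `u`. As `u` is a pivot there is at most one
non-neighbour `w`, so the two reduced trees either coincide (both are the star at `u`) or differ
by the single flip moving `w` from `v` to `v'`.
-/

lemma Set.exists_ne_subset_pair_of_ncard_le_two {α : Type*} [Finite α] [Nontrivial α]
    {s : Set α} {a : α} (h : s.ncard ≤ 2) (ha : a ∈ s) : ∃ b ≠ a, s ⊆ {a, b} := by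
  have hsub : (s \ {a}).Subsingleton := by
    rw [← Set.ncard_le_one_iff_subsingleton, Set.ncard_sdiff_singleton_of_mem ha]
    omega
  rcases hsub.eq_empty_or_singleton with hempty | ⟨b, hb⟩
  · obtain ⟨b, hb⟩ := exists_ne a
    exact ⟨b, hb, (Set.sdiff_eq_empty.1 hempty).trans (by simp)⟩
  · have hb' : b ∈ s \ {a} := hb ▸ rfl
    refine ⟨b, hb'.2, ?_⟩
    rw [← hb, Set.insert_sdiff_singleton]
    exact Set.subset_insert _ _

section Flips

variable {V : Type*} {G T₁ T₂ : SimpleGraph V} {P : SimpleGraph V → Prop}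

lemma EdgeFlip.of_edgeSet_eq {e f : Sym2 V} (he : e ∈ T₁.edgeSet) (hf : f ∉ T₁.edgeSet)
    (h : T₂.edgeSet = (T₁.edgeSet \ {e}) ∪ {f}) : EdgeFlip T₁ T₂ := by
  have hef : e ≠ f := fun hef => hf (hef ▸ he)
  refine ⟨e, he, ?_, f, by simp [h], hf, h⟩
  simp [h, hef]

lemma EdgeFlip.symm (h : EdgeFlip T₁ T₂) : EdgeFlip T₂ T₁ := by
  obtain ⟨e, he, he', f, hf, hf', h⟩ := h
  refine ⟨f, hf, hf', e, he, he', ?_⟩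
  rw [h]
  grind

lemma Step.symm (h : Step G P T₁ T₂) : Step G P T₂ T₁ :=
  ⟨h.2.1, h.1, h.2.2.2.1, h.2.2.1, h.2.2.2.2.symm⟩

lemma Transformable.symm (h : Transformable G P T₁ T₂) : Transformable G P T₂ T₁ := by
  induction h with
  | refl => exact .refl
  | tail _ hstep ih => exact .head hstep.symm ih

end Flips

namespace SimpleGraph

variable {V : Type*} {G T : SimpleGraph V} {u v v' w x : V} {A : Set V}

lemma Reachable.mem_of_forall_adj_mem {S : Set V} {a b : V} (h : G.Reachable a b) (ha : a ∈ S)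
    (hS : ∀ x ∈ S, ∀ y, G.Adj x y → y ∈ S) : b ∈ S := by
  by_contra hb
  obtain ⟨p⟩ := h
  obtain ⟨d, -, hd, hd'⟩ := p.exists_boundary_dart S ha hb
  exact hd' (hS _ hd _ d.adj)

lemma isAcyclic_of_forall_subsingleton_neighborSet (u v : V)
    (h : ∀ x, x ≠ u → x ≠ v → (G.neighborSet x).Subsingleton) : G.IsAcyclic := by
  intro a c hc
  have hsupp : ∀ x ∈ c.support, x = u ∨ x = v := fun x hx => by
    by_contra! hx'
    obtain ⟨y, z, hyz, hyz'⟩ := Set.ncard_eq_two.1 (hc.ncard_neighborSet_toSubgraph_eq_two hx)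
    have hsub := (h x hx'.1 hx'.2).anti (c.toSubgraph.neighborSet_subset x)
    exact hyz (hsub (by simp [hyz']) (by simp [hyz']))
  -- `a`, `c.snd` and `c.penultimate` are three distinct vertices of the cycle
  have hsnd := c.adj_snd hc.not_nil
  have hpen := c.adj_penultimate hc.not_nil
  have hne := hc.snd_ne_penultimate
  rcases hsupp a c.start_mem_support with rfl | rfl <;>
    rcases hsupp _ (c.getVert_mem_support 1) with h1 | h1 <;>
    rcases hsupp _ (c.getVert_mem_support (c.length - 1)) with h2 | h2 <;>
    simp_all

lemma exists_adj_iff_eq_of_notMem_internalNodes (hx : x ∉ internalNodes T) :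
    ∃ y, ∀ z, T.Adj x z ↔ z = y := by
  obtain ⟨y, hy⟩ := Set.ncard_eq_one.1 (not_not.1 hx)
  exact ⟨y, fun z => by rw [← mem_neighborSet, hy, Set.mem_singleton_iff]⟩

lemma adj_iff_eq_of_notMem_internalNodes {y z : V} (hx : x ∉ internalNodes T)
    (hxy : T.Adj x y) : T.Adj x z ↔ z = y := by
  obtain ⟨c, hc⟩ := exists_adj_iff_eq_of_notMem_internalNodes hx
  rw [hc, (hc y).1 hxy]

lemma Connected.mem_internalNodes_or_of_adj (hT : T.Connected) (hu : u ∈ internalNodes T)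
    {a b : V} (hab : T.Adj a b) : a ∈ internalNodes T ∨ b ∈ internalNodes T := by
  by_contra! h
  have hclosed : ∀ x ∈ ({a, b} : Set V), ∀ y, T.Adj x y → y ∈ ({a, b} : Set V) := by
    rintro x (rfl | rfl) y hy
    · exact .inr ((adj_iff_eq_of_notMem_internalNodes h.1 hab).1 hy)
    · exact .inl ((adj_iff_eq_of_notMem_internalNodes h.2 hab.symm).1 hy)
  rcases (hT.preconnected a u).mem_of_forall_adj_mem (.inl rfl) hclosed with rfl | rfl
  · exact h.1 hu
  · exact h.2 hu

lemma Connected.adj_of_internalNodes_subset (hT : T.Connected) (huv : u ≠ v)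
    (hint : internalNodes T ⊆ {u, v}) : T.Adj u v := by
  by_contra huv'
  have hclosed : ∀ x ∈ insert v (T.neighborSet v), ∀ y, T.Adj x y →
      y ∈ insert v (T.neighborSet v) := by
    rintro x (rfl | hx) y hy
    · exact .inr hy
    · have hx' : x ∉ internalNodes T := fun h => by
        rcases hint h with rfl | rfl
        · exact huv' hx.symm
        · exact T.irrefl hx
      exact .inl ((adj_iff_eq_of_notMem_internalNodes hx' hx.symm).1 hy)
  rcases (hT.preconnected v u).mem_of_forall_adj_mem (.inl rfl) hclosed with h | h
  · exact huv h
  · exact huv' h.symm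

/-- The double star with adjacent centres `u`, `v` (when `u, v ∉ A`): the vertices of `A` are
the leaves at `v`, all other vertices are leaves at `u`. -/
def doubleStar (u v : V) (A : Set V) : SimpleGraph V :=
  fromRel fun a b => (a = u ∧ b ∉ A) ∨ (a = v ∧ b ∈ A)

lemma doubleStar_adj {a b : V} : (doubleStar u v A).Adj a b ↔ a ≠ b ∧
    ((a = u ∧ b ∉ A) ∨ (a = v ∧ b ∈ A) ∨ (b = u ∧ a ∉ A) ∨ (b = v ∧ a ∈ A)) := by
  simp only [doubleStar, fromRel_adj, or_assoc]

lemma doubleStar_adj_center (huv : u ≠ v) (hv : v ∉ A) : (doubleStar u v A).Adj u v :=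
  doubleStar_adj.2 ⟨huv, .inl ⟨rfl, hv⟩⟩

lemma neighborSet_doubleStar_of_mem (hu : u ∉ A) (hv : v ∉ A) (hx : x ∈ A) :
    (doubleStar u v A).neighborSet x = {v} := by
  ext y
  simp only [mem_neighborSet, doubleStar_adj, Set.mem_singleton_iff]
  grind

lemma neighborSet_doubleStar_of_notMem (hx : x ∉ A) (hxu : x ≠ u) (hxv : x ≠ v) :
    (doubleStar u v A).neighborSet x = {u} := by
  ext y
  simp only [mem_neighborSet, doubleStar_adj, Set.mem_singleton_iff]
  grind

lemma subsingleton_neighborSet_doubleStar (hu : u ∉ A) (hv : v ∉ A) (hxu : x ≠ u) (hxv : x ≠ v) :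
    ((doubleStar u v A).neighborSet x).Subsingleton := by
  by_cases hx : x ∈ A
  · simp [neighborSet_doubleStar_of_mem hu hv hx]
  · simp [neighborSet_doubleStar_of_notMem hx hxu hxv]

lemma doubleStar_connected (huv : u ≠ v) (hv : v ∉ A) : (doubleStar u v A).Connected := by
  have : Nonempty V := ⟨u⟩
  suffices h : ∀ x, (doubleStar u v A).Reachable u x from
    .mk fun a b => (h a).symm.trans (h b)
  intro x
  by_cases hxu : x = u
  · exact hxu ▸ .rfl
  by_cases hx : x ∈ A
  · exact (doubleStar_adj_center huv hv).reachable.trans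
      (doubleStar_adj.2 ⟨fun h : v = x => hv (h ▸ hx), .inr (.inl ⟨rfl, hx⟩)⟩).reachable
  · exact (doubleStar_adj.2 ⟨Ne.symm hxu, .inl ⟨rfl, hx⟩⟩).reachable

lemma doubleStar_isTree (huv : u ≠ v) (hu : u ∉ A) (hv : v ∉ A) :
    (doubleStar u v A).IsTree :=
  ⟨doubleStar_connected huv hv, isAcyclic_of_forall_subsingleton_neighborSet u v
    fun _ hxu hxv => subsingleton_neighborSet_doubleStar hu hv hxu hxv⟩

lemma internalNodes_doubleStar_subset (hu : u ∉ A) (hv : v ∉ A) :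
    internalNodes (doubleStar u v A) ⊆ {u, v} := by
  intro x hx
  by_contra! hxuv
  simp only [Set.mem_insert_iff, Set.mem_singleton_iff, not_or] at hxuv
  apply hx
  by_cases hxA : x ∈ A
  · simp [neighborSet_doubleStar_of_mem hu hv hxA]
  · simp [neighborSet_doubleStar_of_notMem hxA hxuv.1 hxuv.2]

lemma ncard_internalNodes_doubleStar_le (hu : u ∉ A) (hv : v ∉ A) :
    (internalNodes (doubleStar u v A)).ncard ≤ 2 :=
  (Set.ncard_le_ncard (internalNodes_doubleStar_subset hu hv)).trans
    ((Set.ncard_insert_le _ _).trans (by simp))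

lemma doubleStar_empty (v' : V) : doubleStar u v ∅ = doubleStar u v' ∅ := by
  ext a b
  simp [doubleStar_adj]

lemma doubleStar_le_iff : doubleStar u v A ≤ G ↔
    (∀ x, x ≠ u → x ∉ A → G.Adj u x) ∧ ∀ x ∈ A, x ≠ v → G.Adj v x := by
  constructor
  · intro h
    exact ⟨fun x hxu hx => h (doubleStar_adj.2 ⟨Ne.symm hxu, .inl ⟨rfl, hx⟩⟩),
      fun x hx hxv => h (doubleStar_adj.2 ⟨Ne.symm hxv, .inr (.inl ⟨rfl, hx⟩)⟩)⟩
  · rintro ⟨hu, hv⟩ a b hab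
    rcases doubleStar_adj.1 hab with
      ⟨hne, ⟨rfl, hb⟩ | ⟨rfl, hb⟩ | ⟨rfl, ha⟩ | ⟨rfl, ha⟩⟩
    · exact hu b hne.symm hb
    · exact hv b hb hne.symm
    · exact (hu a hne ha).symm
    · exact (hv a ha hne).symm

lemma doubleStar_sdiff_le {S : Set V} (h : doubleStar u v A ≤ G) (hS : S ⊆ G.neighborSet u) :
    doubleStar u v (A \ S) ≤ G := by
  rw [doubleStar_le_iff] at h ⊢
  refine ⟨fun x hxu hx => ?_, fun x hx hxv => h.2 x hx.1 hxv⟩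
  by_cases hxS : x ∈ S
  · exact hS hxS
  · exact h.1 x hxu fun hxA => hx ⟨hxA, hxS⟩

lemma sdiff_neighborSet_eq_compl_insert (h : doubleStar u v A ≤ G) (hu : u ∉ A) :
    A \ G.neighborSet u = (insert u (G.neighborSet u))ᶜ := by
  ext x
  simp only [Set.mem_sdiff, Set.mem_compl_iff, Set.mem_insert_iff, not_or, mem_neighborSet]
  refine ⟨fun ⟨hx, hux⟩ => ⟨fun hxu => hu (hxu ▸ hx), hux⟩, fun ⟨hxu, hux⟩ => ⟨?_, hux⟩⟩
  by_contra hx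
  exact hux ((doubleStar_le_iff.1 h).1 x hxu hx)

lemma Connected.eq_doubleStar (hT : T.Connected) (huv : u ≠ v) (hu : u ∈ internalNodes T)
    (hint : internalNodes T ⊆ {u, v}) :
    T = doubleStar u v (T.neighborSet v \ {u}) := by
  have hcenter : ∀ {a b}, T.Adj a b → a = u ∨ a = v ∨ b = u ∨ b = v := fun hab => by
    rcases hT.mem_internalNodes_or_of_adj hu hab with h | h <;>
      rcases hint h with rfl | rfl <;> simp
  have hleaf : ∀ x, x ≠ u → x ≠ v → (T.Adj u x ↔ ¬ T.Adj v x) := by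
    intro x hxu hxv
    have hx : x ∉ internalNodes T := fun h => (hint h).elim hxu hxv
    obtain ⟨c, hc⟩ := exists_adj_iff_eq_of_notMem_internalNodes hx
    have hcuv := hcenter ((hc c).2 rfl)
    rw [T.adj_comm u, T.adj_comm v, hc, hc]
    grind
  have huv' := hT.adj_of_internalNodes_subset huv hint
  have hloop : ∀ x, ¬ T.Adj x x := fun _ => T.irrefl
  clear hint hu
  ext a b
  simp only [doubleStar_adj, Set.mem_sdiff, mem_neighborSet, Set.mem_singleton_iff]
  grind [T.adj_symm]

lemma edgeSet_doubleStar_sdiff_singleton (hu : u ∉ A) (hv : v ∉ A) (hx : x ∈ A) :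
    (doubleStar u v (A \ {x})).edgeSet =
      ((doubleStar u v A).edgeSet \ {s(v, x)}) ∪ {s(u, x)} := by
  have hxu : x ≠ u := fun h => hu (h ▸ hx)
  have hxv : x ≠ v := fun h => hv (h ▸ hx)
  ext ⟨a, b⟩
  simp only [Set.mem_union, Set.mem_sdiff, Set.mem_singleton_iff, mem_edgeSet, doubleStar_adj,
    Sym2.eq_iff]
  grind

lemma edgeSet_doubleStar_singleton (hwu : w ≠ u) (hwv' : w ≠ v') :
    (doubleStar u v' {w}).edgeSet =
      ((doubleStar u v {w}).edgeSet \ {s(v, w)}) ∪ {s(v', w)} := by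
  ext ⟨a, b⟩
  simp only [Set.mem_union, Set.mem_sdiff, Set.mem_singleton_iff, mem_edgeSet, doubleStar_adj,
    Sym2.eq_iff]
  grind

lemma subsingleton_compl_insert_neighborSet [Fintype V]
    (h : Fintype.card V - 2 ≤ (G.neighborSet u).ncard) :
    (insert u (G.neighborSet u))ᶜ.Subsingleton := by
  rw [← Set.ncard_le_one_iff_subsingleton, Set.ncard_compl,
    Set.ncard_insert_of_notMem (show u ∉ G.neighborSet u from G.irrefl), Nat.card_eq_fintype_card]
  omega

lemma isSpanningTree_doubleStar (huv : u ≠ v) (hu : u ∉ A) (hv : v ∉ A)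
    (hG : doubleStar u v A ≤ G) : IsSpanningTree G (doubleStar u v A) :=
  ⟨hG, doubleStar_isTree huv hu hv⟩

lemma step_doubleStar_sdiff_singleton (huv : u ≠ v) (hu : u ∉ A) (hv : v ∉ A) (hx : x ∈ A)
    (hG : doubleStar u v A ≤ G) (hux : G.Adj u x) :
    Step G (fun S => (internalNodes S).ncard ≤ 2)
      (doubleStar u v A) (doubleStar u v (A \ {x})) := by
  have hu' : u ∉ A \ {x} := fun h => hu h.1
  have hv' : v ∉ A \ {x} := fun h => hv h.1
  refine ⟨isSpanningTree_doubleStar huv hu hv hG,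
    isSpanningTree_doubleStar huv hu' hv' (doubleStar_sdiff_le hG (by simpa using hux)),
    ncard_internalNodes_doubleStar_le hu hv, ncard_internalNodes_doubleStar_le hu' hv',
    .of_edgeSet_eq (e := s(v, x)) ?_ ?_ (edgeSet_doubleStar_sdiff_singleton hu hv hx)⟩
  · exact doubleStar_adj.2 ⟨fun h : v = x => hv (h ▸ hx), .inr (.inl ⟨rfl, hx⟩)⟩
  · simp only [mem_edgeSet, doubleStar_adj]
    grind

lemma step_doubleStar_singleton (huv : u ≠ v) (huv' : u ≠ v') (hvv' : v ≠ v') (hwu : w ≠ u)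
    (hwv : w ≠ v) (hwv' : w ≠ v') (hG : doubleStar u v {w} ≤ G) (hG' : doubleStar u v' {w} ≤ G) :
    Step G (fun S => (internalNodes S).ncard ≤ 2)
      (doubleStar u v {w}) (doubleStar u v' {w}) := by
  refine ⟨isSpanningTree_doubleStar huv hwu.symm hwv.symm hG,
    isSpanningTree_doubleStar huv' hwu.symm hwv'.symm hG',
    ncard_internalNodes_doubleStar_le hwu.symm hwv.symm,
    ncard_internalNodes_doubleStar_le hwu.symm hwv'.symm,
    .of_edgeSet_eq (e := s(v, w)) ?_ ?_ (edgeSet_doubleStar_singleton hwu hwv')⟩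
  · exact doubleStar_adj.2 ⟨hwv.symm, .inr (.inl ⟨rfl, rfl⟩)⟩
  · simp only [mem_edgeSet, doubleStar_adj]
    grind

lemma transformable_doubleStar_sdiff [Finite V] (huv : u ≠ v) (hu : u ∉ A) (hv : v ∉ A)
    (hG : doubleStar u v A ≤ G) {B : Set V} (hB : B ⊆ G.neighborSet u) :
    Transformable G (fun S => (internalNodes S).ncard ≤ 2)
      (doubleStar u v A) (doubleStar u v (A \ B)) := by
  induction B, B.toFinite using Set.Finite.induction_on with
  | empty => simpa using .refl
  | @insert x B _ _ ih =>
    have hB' := (Set.subset_insert x B).trans hB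
    rw [Set.insert_eq, Set.union_comm, ← Set.sdiff_sdiff]
    by_cases hx : x ∈ A \ B
    · exact (ih hB').tail <| step_doubleStar_sdiff_singleton huv (fun h => hu h.1)
        (fun h => hv h.1) hx (doubleStar_sdiff_le hG hB') (hB (Set.mem_insert x B))
    · rw [Set.sdiff_singleton_eq_self hx]
      exact ih hB'

lemma transformable_doubleStar_of_subsingleton {W : Set V} (hW : W.Subsingleton) (huv : u ≠ v)
    (huv' : u ≠ v') (hu : u ∉ W) (hv : v ∉ W) (hv' : v' ∉ W)
    (hG : doubleStar u v W ≤ G) (hG' : doubleStar u v' W ≤ G) :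
    Transformable G (fun S => (internalNodes S).ncard ≤ 2)
      (doubleStar u v W) (doubleStar u v' W) := by
  rcases hW.eq_empty_or_singleton with rfl | ⟨w, rfl⟩
  · rw [doubleStar_empty v']
    exact .refl
  by_cases hvv' : v = v'
  · rw [hvv']
    exact .refl
  exact .single <| step_doubleStar_singleton huv huv' hvv' (Ne.symm hu) (Ne.symm hv)
    (Ne.symm hv') hG hG'

lemma transformable_doubleStar_of_subsingleton_compl [Finite V]
    (hW : (insert u (G.neighborSet u))ᶜ.Subsingleton) {A' : Set V} (huv : u ≠ v) (huv' : u ≠ v')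
    (hu : u ∉ A) (hv : v ∉ A) (hu' : u ∉ A') (hv' : v' ∉ A')
    (hG : doubleStar u v A ≤ G) (hG' : doubleStar u v' A' ≤ G) :
    Transformable G (fun S => (internalNodes S).ncard ≤ 2)
      (doubleStar u v A) (doubleStar u v' A') := by
  have hT := transformable_doubleStar_sdiff huv hu hv hG subset_rfl
  have hT' := transformable_doubleStar_sdiff huv' hu' hv' hG' subset_rfl
  have hGW := doubleStar_sdiff_le hG subset_rfl
  have hGW' := doubleStar_sdiff_le hG' subset_rfl
  rw [sdiff_neighborSet_eq_compl_insert hG hu] at hT hGW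
  rw [sdiff_neighborSet_eq_compl_insert hG' hu'] at hT' hGW'
  refine hT.trans ((transformable_doubleStar_of_subsingleton hW huv huv' ?_ ?_ ?_ hGW hGW').trans
    hT'.symm)
  · simp
  · exact Set.notMem_compl_iff.2 (.inr (hG (doubleStar_adj_center huv hv)))
  · exact Set.notMem_compl_iff.2 (.inr (hG' (doubleStar_adj_center huv' hv')))

end SimpleGraph

theorem pivot_vertex_same_component_general
    {V : Type*} [Fintype V] (G : SimpleGraph V)
    (u : V) (hu : Fintype.card V - 2 ≤ (G.neighborSet u).ncard)
    (T T' : SimpleGraph V)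
    (hT : IsSpanningTree G T) (hT' : IsSpanningTree G T')
    (hkT : (internalNodes T).ncard ≤ 2) (hkT' : (internalNodes T').ncard ≤ 2)
    (huT : u ∈ internalNodes T) (huT' : u ∈ internalNodes T') :
    Transformable G (fun S => (internalNodes S).ncard ≤ 2) T T' := by
  rcases subsingleton_or_nontrivial V with hV | hV
  · obtain rfl : T = T' := by ext a b; simp [Subsingleton.elim a b]
    exact .refl
  obtain ⟨v, hvu, hTv⟩ := Set.exists_ne_subset_pair_of_ncard_le_two hkT huT
  obtain ⟨v', hv'u, hT'v'⟩ := Set.exists_ne_subset_pair_of_ncard_le_two hkT' huT'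
  obtain ⟨A, huA, hvA, rfl⟩ : ∃ A, u ∉ A ∧ v ∉ A ∧ T = doubleStar u v A :=
    ⟨_, by simp, by simp, hT.2.connected.eq_doubleStar hvu.symm huT hTv⟩
  obtain ⟨A', huA', hv'A', rfl⟩ : ∃ A', u ∉ A' ∧ v' ∉ A' ∧ T' = doubleStar u v' A' :=
    ⟨_, by simp, by simp, hT'.2.connected.eq_doubleStar hv'u.symm huT' hT'v'⟩
  exact transformable_doubleStar_of_subsingleton_compl (subsingleton_compl_insert_neighborSet hu)
    hvu.symm hv'u.symm huA hvA huA' hv'A' hT.1 hT'.1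

/-- If `u` is a pivot vertex of `G` (degree at least `n - 2`), then any two spanning
trees with at most two internal nodes that both have `u` as an internal node are
connected by a transformation in which every tree has at most two internal nodes. -/
theorem pivot_vertex_same_component
    {V : Type*} [Fintype V] (G : SimpleGraph V) (hG : G.Connected)
    (u : V) (hu : Fintype.card V - 2 ≤ (G.neighborSet u).ncard)
    (T T' : SimpleGraph V)
    (hT : IsSpanningTree G T) (hT' : IsSpanningTree G T')
    (hkT : (internalNodes T).ncard ≤ 2) (hkT' : (internalNodes T').ncard ≤ 2)
    (huT : u ∈ internalNodes T) (huT' : u ∈ internalNodes T') :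
    Transformable G (fun S => (internalNodes S).ncard ≤ 2) T T' :=
  pivot_vertex_same_component_general G u hu T T' hT hT' hkT hkT' huT huT'
end

section
/- Let G be a finite connected simple graph on n ≥ 4 vertices and let T₁ and T₂ be two spanning trees of G each having exactly one internal node (i.e. each is a spanning star). Then there exists a transformation from T₁ to T₂ in which every tree of the sequence has at most one internal node if and only if T₁ and T₂ have the same internal node. -/
open SimpleGraph

/-!
A spanning tree with exactly one internal node `c` is the star centred at `c`: a leaf whose
neighbour is also a leaf would span a whole component by itself. Hence two spanning stars with
the same centre coincide, and a single edge flip between stars with different centres `a ≠ b`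
is impossible once there are two vertices `x, y ∉ {a, b}`, since both edges `ax` and `ay` would
have to be removed. Finally, with at least three vertices every spanning tree with at most one
internal node is a star, so no transformation of the kind considered can move the centre.
-/

namespace SimpleGraph

variable {V : Type*}

lemma exists_neighborSet_eq_singleton_of_notMem_internalNodes {T : SimpleGraph V} {v : V}
    (hv : v ∉ internalNodes T) : ∃ x, T.neighborSet v = {x} :=
  Set.ncard_eq_one.mp (not_not.mp hv)

lemma Reachable.eq_or_eq_of_neighborSet_eq_singleton {T : SimpleGraph V} {u v w : V}
    (hu : T.neighborSet u = {v}) (hv : T.neighborSet v = {u}) (h : T.Reachable u w) :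
    w = u ∨ w = v := by
  have hreach := (reachable_iff_reflTransGen u w).mp h
  clear h
  induction hreach with
  | refl => exact .inl rfl
  | tail _ hadj ih =>
    rcases ih with rfl | rfl
    · exact .inr (by simpa [← mem_neighborSet, hu] using hadj)
    · exact .inl (by simpa [← mem_neighborSet, hv] using hadj)

lemma eq_starGraph_of_internalNodes_eq_singleton {T : SimpleGraph V} (hT : T.Connected)
    {c : V} (hc : internalNodes T = {c}) : T = starGraph c := by
  have leaf : ∀ w, w ≠ c → ∃ x, T.neighborSet w = {x} := fun w hw =>
    exists_neighborSet_eq_singleton_of_notMem_internalNodes (by simpa [hc] using hw)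
  have adj_center : ∀ w, w ≠ c → T.Adj w c := by
    intro w hw
    obtain ⟨x, hx⟩ := leaf w hw
    have hwx : T.Adj w x := by simp [← mem_neighborSet, hx]
    by_contra hwc
    have hxc : x ≠ c := by rintro rfl; exact hwc hwx
    obtain ⟨y, hy⟩ := leaf x hxc
    have hxw : T.neighborSet x = {w} := by
      have hw_mem : w ∈ T.neighborSet x := hwx.symm
      rw [hy] at hw_mem
      rw [hy, Set.mem_singleton_iff.mp hw_mem]
    rcases (hT.preconnected w c).eq_or_eq_of_neighborSet_eq_singleton hx hxw with h | h
    · exact hw h.symm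
    · exact hxc h.symm
  ext u v
  rw [starGraph_adj]
  constructor
  · intro huv
    refine ⟨huv.ne, ?_⟩
    by_contra! hne
    obtain ⟨x, hx⟩ := leaf u hne.1
    have hv : v ∈ T.neighborSet u := huv
    have hc' : c ∈ T.neighborSet u := adj_center u hne.1
    rw [hx] at hv hc'
    exact hne.2 (hv.trans hc'.symm)
  · rintro ⟨hne, rfl | rfl⟩
    · exact (adj_center v hne.symm).symm
    · exact adj_center u hne

lemma exists_notMem_of_card_lt [Fintype V] (s : Finset V) (h : s.card < Fintype.card V) :
    ∃ x, x ∉ s := by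
  obtain ⟨x, -, hx⟩ := Finset.exists_mem_notMem_of_card_lt_card (s := s) (t := Finset.univ)
    (by rwa [Finset.card_univ])
  exact ⟨x, hx⟩

lemma exists_internalNodes_eq_singleton [Fintype V] (h3 : 3 ≤ Fintype.card V)
    {T : SimpleGraph V} (hT : T.Connected) (hk : (internalNodes T).ncard ≤ 1) :
    ∃ c, internalNodes T = {c} := by
  classical
  rcases Nat.le_one_iff_eq_zero_or_eq_one.mp hk with h0 | h1
  · have leaf : ∀ w, ∃ x, T.neighborSet w = {x} := fun w =>
      exists_neighborSet_eq_singleton_of_notMem_internalNodes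
        (by simp [(Set.ncard_eq_zero).mp h0])
    obtain ⟨u⟩ := hT.nonempty
    obtain ⟨v, hv⟩ := leaf u
    obtain ⟨w, hw⟩ := leaf v
    have hu_mem : u ∈ T.neighborSet v := by
      rw [mem_neighborSet, adj_comm, ← mem_neighborSet, hv]; rfl
    rw [hw, Set.mem_singleton_iff] at hu_mem
    subst hu_mem
    obtain ⟨x, hx⟩ := exists_notMem_of_card_lt {u, v}
      (Finset.card_le_two.trans_lt (by omega))
    rw [Finset.mem_insert, Finset.mem_singleton, not_or] at hx
    rcases (hT.preconnected u x).eq_or_eq_of_neighborSet_eq_singleton hv hw with h | h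
    · exact absurd h hx.1
    · exact absurd h hx.2
  · exact Set.ncard_eq_one.mp h1

lemma eq_of_edgeFlip_starGraph [Fintype V] (hn : 4 ≤ Fintype.card V) {a b : V}
    (h : EdgeFlip (starGraph a) (starGraph b)) : a = b := by
  classical
  obtain ⟨e, -, -, f, -, -, hE⟩ := h
  by_contra hab
  have removed : ∀ x, x ≠ a → x ≠ b → s(a, x) = e := by
    intro x hxa hxb
    by_contra hne
    have hkept : s(a, x) ∈ (starGraph b).edgeSet := by
      rw [hE]
      exact Or.inl ⟨by simpa using hxa.symm, hne⟩
    simp [hab, hxa.symm] at hkept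
    exact hxb hkept
  obtain ⟨x, hx⟩ := exists_notMem_of_card_lt {a, b}
    (Finset.card_le_two.trans_lt (by omega))
  obtain ⟨y, hy⟩ := exists_notMem_of_card_lt {a, b, x}
    (Finset.card_le_three.trans_lt (by omega))
  simp only [Finset.mem_insert, Finset.mem_singleton, not_or] at hx hy
  exact hy.2.2 (Sym2.congr_right.mp ((removed y hy.1 hy.2.1).trans (removed x hx.1 hx.2).symm))

lemma internalNodes_eq_of_step [Fintype V] (hn : 4 ≤ Fintype.card V) {G T₁ T₂ : SimpleGraph V}
    (h : Step G (fun S => (internalNodes S).ncard ≤ 1) T₁ T₂) :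
    internalNodes T₁ = internalNodes T₂ := by
  obtain ⟨hT₁, hT₂, hk₁, hk₂, hflip⟩ := h
  obtain ⟨c₁, hc₁⟩ := exists_internalNodes_eq_singleton (by omega) hT₁.2.connected hk₁
  obtain ⟨c₂, hc₂⟩ := exists_internalNodes_eq_singleton (by omega) hT₂.2.connected hk₂
  rw [eq_starGraph_of_internalNodes_eq_singleton hT₁.2.connected hc₁,
    eq_starGraph_of_internalNodes_eq_singleton hT₂.2.connected hc₂] at hflip
  rw [hc₁, hc₂, eq_of_edgeFlip_starGraph hn hflip]

lemma internalNodes_eq_of_transformable [Fintype V] (hn : 4 ≤ Fintype.card V)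
    {G T₁ T₂ : SimpleGraph V}
    (h : Transformable G (fun S => (internalNodes S).ncard ≤ 1) T₁ T₂) :
    internalNodes T₁ = internalNodes T₂ := by
  induction h with
  | refl => rfl
  | tail _ hstep ih => exact ih.trans (internalNodes_eq_of_step hn hstep)

end SimpleGraph

theorem spanning_star_reconfiguration_iff_general
    {V : Type*} [Fintype V] (hn : 4 ≤ Fintype.card V)
    (G : SimpleGraph V)
    (T₁ T₂ : SimpleGraph V)
    (h₁ : IsSpanningTree G T₁) (h₂ : IsSpanningTree G T₂)
    (hk₁ : (internalNodes T₁).ncard = 1) :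
    Transformable G (fun S => (internalNodes S).ncard ≤ 1) T₁ T₂ ↔
      internalNodes T₁ = internalNodes T₂ := by
  refine ⟨internalNodes_eq_of_transformable hn, fun h => ?_⟩
  obtain ⟨c, hc⟩ := Set.ncard_eq_one.mp hk₁
  rw [eq_starGraph_of_internalNodes_eq_singleton h₁.2.connected hc,
    eq_starGraph_of_internalNodes_eq_singleton h₂.2.connected (h ▸ hc)]
  exact Relation.ReflTransGen.refl

/-- On a connected graph with at least four vertices, two spanning stars (spanning trees
with exactly one internal node) are connected by a transformation keeping at most one
internal node if and only if they have the same internal node. -/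
theorem spanning_star_reconfiguration_iff
    {V : Type*} [Fintype V] (hn : 4 ≤ Fintype.card V)
    (G : SimpleGraph V) (hG : G.Connected)
    (T₁ T₂ : SimpleGraph V)
    (h₁ : IsSpanningTree G T₁) (h₂ : IsSpanningTree G T₂)
    (hk₁ : (internalNodes T₁).ncard = 1) (hk₂ : (internalNodes T₂).ncard = 1) :
    Transformable G (fun S => (internalNodes S).ncard ≤ 1) T₁ T₂ ↔
      internalNodes T₁ = internalNodes T₂ :=
  spanning_star_reconfiguration_iff_general hn G T₁ T₂ h₁ h₂ hk₁
end

section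
/- Let G be a finite connected simple graph, let T be a spanning tree of G, and let u and v be two distinct internal nodes of T such that the closed neighborhood of u in G is contained in the closed neighborhood of v in G (N_G[u] ⊆ N_G[v]). Then there exists a transformation from T to a spanning tree T' with in(T') ⊆ in(T) \ {u}, such that every tree S of the sequence satisfies in(S) ⊆ in(T). In particular, T does not minimize the number of internal nodes within its edge-flip reconfiguration class with threshold |in(T)|. -/
open SimpleGraph

/-!
While `u` is not a leaf of the current tree `S`, pick a neighbour `w` of `u` in `S` that is
not on the `u`–`v` path and replace the edge `uw` by `vw`, an edge of `G` because
`N_G[u] ⊆ N_G[v]`. As `v` stays on `u`'s side of the bridge `uw`, this is again a spanning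
tree. Only `u` loses and `v` gains a neighbour, while `w` trades `u` for `v`, so the only
vertices that can be internal afterwards but not before are `u` and `v`. The degree of `u`
drops, so `u` eventually becomes a leaf.
-/

namespace SimpleGraph

variable {V : Type*} {G H S : SimpleGraph V} {u v w x : V}

lemma Reachable.of_forall_adj_reachable (h : ∀ ⦃a b⦄, G.Adj a b → H.Reachable a b)
    {y : V} (hxy : G.Reachable x y) : H.Reachable x y := by
  rw [reachable_iff_reflTransGen] at hxy ⊢
  exact Relation.reflTransGen_closed (fun a b hab => (reachable_iff_reflTransGen a b).1 (h hab))
    _ _ hxy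

lemma Reachable.exists_adj_reachable_deleteEdges (hr : S.Reachable u v) (huv : u ≠ v)
    (hu : 1 < (S.neighborSet u).ncard) :
    ∃ w, S.Adj u w ∧ (S.deleteEdges {s(u, w)}).Reachable u v := by
  obtain ⟨p, hp⟩ := hr.exists_isPath
  cases p with
  | nil => exact absurd rfl huv
  | @cons _ w₀ _ h q =>
    obtain ⟨w, huw, hw⟩ := Set.exists_ne_of_one_lt_ncard hu w₀
    refine ⟨w, huw, reachable_deleteEdges_iff_exists_walk.mpr ⟨.cons h q, ?_⟩⟩
    rw [Walk.edges_cons, List.mem_cons, not_or]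
    refine ⟨fun h => hw (Sym2.congr_right.mp h), fun hq => ?_⟩
    exact ((Walk.cons_isPath_iff _ _).mp hp).2 (q.fst_mem_support_of_mem_edges hq)

lemma IsAcyclic.not_reachable_deleteEdges (hS : S.IsAcyclic) (huw : S.Adj u w)
    (hv : (S.deleteEdges {s(u, w)}).Reachable u v) :
    ¬ (S.deleteEdges {s(u, w)}).Reachable v w :=
  fun hvw => isAcyclic_iff_forall_adj_isBridge.mp hS huw (hv.trans hvw)

def moveEdge (S : SimpleGraph V) (u v w : V) : SimpleGraph V :=
  S.deleteEdges {s(u, w)} ⊔ edge v w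

lemma moveEdge_le (hS : S ≤ G) (hvw : G.Adj v w) : S.moveEdge u v w ≤ G :=
  sup_le ((deleteEdges_le _).trans hS) ((edge_le_iff G).mpr (.inr hvw))

lemma IsTree.moveEdge (hS : S.IsTree) (huw : S.Adj u w)
    (hv : (S.deleteEdges {s(u, w)}).Reachable u v) : (S.moveEdge u v w).IsTree := by
  have hnr := hS.isAcyclic.not_reachable_deleteEdges huw hv
  have hvw : (S.moveEdge u v w).Adj v w :=
    Or.inr ((edge_adj ..).mpr ⟨.inl ⟨rfl, rfl⟩, fun h => hnr (h ▸ .rfl)⟩)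
  have huw' : (S.moveEdge u v w).Reachable u w :=
    (hv.mono le_sup_left).trans hvw.reachable
  have := hS.connected.nonempty
  refine ⟨.mk fun x y => (hS.connected.preconnected x y).of_forall_adj_reachable ?_,
    (hS.isAcyclic.anti (deleteEdges_le _)).sup_edge_of_not_reachable hnr⟩
  intro a b hab
  by_cases he : s(a, b) = s(u, w)
  · rcases Sym2.eq_iff.mp he with ⟨rfl, rfl⟩ | ⟨rfl, rfl⟩
    exacts [huw', huw'.symm]
  · exact Adj.reachable (Or.inl ((deleteEdges_adj ..).mpr ⟨hab, he⟩))

lemma edgeSet_moveEdge (hvw : v ≠ w) :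
    (S.moveEdge u v w).edgeSet = (S.edgeSet \ {s(u, w)}) ∪ {s(v, w)} := by
  rw [moveEdge, edgeSet_sup, edgeSet_deleteEdges, edgeSet_edge_of_ne hvw]

lemma neighborSet_moveEdge_of_ne (hu : x ≠ u) (hv : x ≠ v) (hw : x ≠ w) :
    (S.moveEdge u v w).neighborSet x = S.neighborSet x := by
  ext y
  simp [moveEdge, edge_adj, hu, hv, hw]

lemma neighborSet_moveEdge_left (huv : u ≠ v) (huw : u ≠ w) :
    (S.moveEdge u v w).neighborSet u = S.neighborSet u \ {w} := by
  ext y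
  simp [moveEdge, edge_adj, huv, huw]

lemma neighborSet_moveEdge_right (hvw : v ≠ w) :
    (S.moveEdge u v w).neighborSet w = insert v (S.neighborSet w \ {u}) := by
  ext y
  simp only [moveEdge, mem_neighborSet, sup_adj, deleteEdges_adj, edge_adj, Set.mem_insert_iff,
    Set.mem_sdiff, Set.mem_singleton_iff]
  grind

end SimpleGraph

open SimpleGraph

section MoveEdge

variable {V : Type*} {S : SimpleGraph V} {u v w : V}

lemma edgeFlip_moveEdge (huv : u ≠ v) (huw : S.Adj u w) (hvw : v ≠ w) (hnadj : ¬ S.Adj v w) :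
    EdgeFlip S (S.moveEdge u v w) := by
  have hne : s(u, w) ≠ s(v, w) := by simp [huv, huw.ne]
  refine ⟨s(u, w), huw, ?_, s(v, w), ?_, hnadj, edgeSet_moveEdge hvw⟩ <;>
    simp [edgeSet_moveEdge hvw, hne, hne.symm]

variable [Finite V]

lemma ncard_neighborSet_moveEdge_lt (huv : u ≠ v) (huw : S.Adj u w) :
    ((S.moveEdge u v w).neighborSet u).ncard < (S.neighborSet u).ncard := by
  rw [neighborSet_moveEdge_left huv huw.ne]
  exact Set.ncard_sdiff_singleton_lt_of_mem huw

lemma internalNodes_moveEdge_subset (huw : S.Adj u w) (hvw : v ≠ w) (hnadj : ¬ S.Adj v w) :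
    internalNodes (S.moveEdge u v w) ⊆ insert u (insert v (internalNodes S)) := by
  intro x hx
  by_cases hxu : x = u
  · exact .inl hxu
  by_cases hxv : x = v
  · exact .inr (.inl hxv)
  refine .inr (.inr ?_)
  by_cases hxw : x = w
  · subst hxw
    have hv : v ∉ S.neighborSet x \ {u} := fun h => hnadj h.1.symm
    have hcard : ((S.moveEdge u v x).neighborSet x).ncard = (S.neighborSet x).ncard := by
      rw [neighborSet_moveEdge_right hvw, Set.ncard_insert_of_notMem hv,
        Set.ncard_sdiff_singleton_add_one (s := S.neighborSet x) huw.symm]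
    simpa only [internalNodes, Set.mem_ofPred_eq, hcard] using hx
  · simpa only [internalNodes, Set.mem_ofPred_eq, neighborSet_moveEdge_of_ne hxu hxv hxw] using hx

end MoveEdge

lemma Transformable.isSpanningTree_and {V : Type*} {G : SimpleGraph V}
    {P : SimpleGraph V → Prop} {T₁ T₂ : SimpleGraph V} (h : Transformable G P T₁ T₂)
    (hT₁ : IsSpanningTree G T₁) (hP : P T₁) : IsSpanningTree G T₂ ∧ P T₂ := by
  induction h with
  | refl => exact ⟨hT₁, hP⟩
  | tail _ hstep _ => exact ⟨hstep.2.1, hstep.2.2.2.1⟩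

lemma exists_transformable_ncard_neighborSet_eq_one {V : Type*} [Finite V]
    {G : SimpleGraph V} {I : Set V} {u v : V} (huv : u ≠ v) (hu : u ∈ I) (hv : v ∈ I)
    (hnbr : insert u (G.neighborSet u) ⊆ insert v (G.neighborSet v))
    {S : SimpleGraph V} (hS : IsSpanningTree G S) (hSI : internalNodes S ⊆ I) :
    ∃ T', (T'.neighborSet u).ncard = 1 ∧
      Transformable G (fun S => internalNodes S ⊆ I) S T' := by
  induction hn : (S.neighborSet u).ncard using Nat.strong_induction_on generalizing S with
  | _ n ih =>
  have huv' : S.Reachable u v := hS.2.connected.preconnected u v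
  by_cases hn1 : n = 1
  · exact ⟨S, hn.trans hn1, .refl⟩
  have hn0 : 0 < n :=
    hn ▸ (Set.ncard_pos (Set.toFinite _)).mpr (huv'.nonempty_neighborSet_left huv)
  obtain ⟨w, huw, hreach⟩ := huv'.exists_adj_reachable_deleteEdges huv (by omega)
  -- `s(u, w)` is a bridge of the tree `S` with `v` on `u`'s side.
  have hnr := hS.2.isAcyclic.not_reachable_deleteEdges huw hreach
  have hvw : v ≠ w := fun h => hnr (h ▸ .rfl)
  have hnadj : ¬ S.Adj v w := fun h =>
    hnr ((deleteEdges_adj ..).mpr ⟨h, by simp [huv.symm, hvw]⟩).reachable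
  have hGvw : G.Adj v w :=
    (Set.mem_insert_iff.mp (hnbr (.inr (hS.1 huw)))).resolve_left hvw.symm
  set S' := S.moveEdge u v w
  have hS' : IsSpanningTree G S' := ⟨moveEdge_le hS.1 hGvw, hS.2.moveEdge huw hreach⟩
  have hS'I : internalNodes S' ⊆ I :=
    (internalNodes_moveEdge_subset huw hvw hnadj).trans
      (Set.insert_subset hu (Set.insert_subset hv hSI))
  obtain ⟨T', hT', htrans⟩ :=
    ih _ (hn ▸ ncard_neighborSet_moveEdge_lt huv huw) hS' hS'I rfl
  exact ⟨T', hT', .head ⟨hS, hS', hSI, hS'I, edgeFlip_moveEdge huv huw hvw hnadj⟩ htrans⟩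

theorem remove_dominated_internal_node_general
    {V : Type*} [Fintype V] (G : SimpleGraph V)
    (T : SimpleGraph V) (hT : IsSpanningTree G T)
    (u v : V) (huv : u ≠ v)
    (hu : u ∈ internalNodes T) (hv : v ∈ internalNodes T)
    (hnbr : insert u (G.neighborSet u) ⊆ insert v (G.neighborSet v)) :
    ∃ T' : SimpleGraph V, IsSpanningTree G T' ∧
      internalNodes T' ⊆ internalNodes T \ {u} ∧
      (internalNodes T').ncard < (internalNodes T).ncard ∧
      Transformable G (fun S => internalNodes S ⊆ internalNodes T) T T' := by
  obtain ⟨T', hleaf, htrans⟩ :=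
    exists_transformable_ncard_neighborSet_eq_one huv hu hv hnbr hT subset_rfl
  obtain ⟨hT', hT'T⟩ := htrans.isSpanningTree_and hT subset_rfl
  have hu' : u ∉ internalNodes T' := fun h => h hleaf
  refine ⟨T', hT', fun x hx => ⟨hT'T hx, ?_⟩,
    Set.ncard_lt_ncard ⟨hT'T, fun h => hu' (h hu)⟩, htrans⟩
  rintro rfl
  exact hu' hx

/-- If `u` and `v` are distinct internal nodes of a spanning tree `T` with
`N_G[u] ⊆ N_G[v]`, then `T` can be transformed, never creating a new internal node,
into a spanning tree `T'` with `in(T') ⊆ in(T) \ {u}`; in particular `T'` has strictly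
fewer internal nodes than `T`. -/
theorem remove_dominated_internal_node
    {V : Type*} [Fintype V] (G : SimpleGraph V) (hG : G.Connected)
    (T : SimpleGraph V) (hT : IsSpanningTree G T)
    (u v : V) (huv : u ≠ v)
    (hu : u ∈ internalNodes T) (hv : v ∈ internalNodes T)
    (hnbr : insert u (G.neighborSet u) ⊆ insert v (G.neighborSet v)) :
    ∃ T' : SimpleGraph V, IsSpanningTree G T' ∧
      internalNodes T' ⊆ internalNodes T \ {u} ∧
      (internalNodes T').ncard < (internalNodes T).ncard ∧
      Transformable G (fun S => internalNodes S ⊆ internalNodes T) T T' :=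
  remove_dominated_internal_node_general G T hT u v huv hu hv hnbr
end

section
/- Let R be the edge-gadget graph on the twelve vertices x_u, y_u, x_v, y_v, r₁, r₂, r₃, r₄, r₅, r₆, r₇, r₈ whose edges are: the path x_u r₁ r₂ r₃ r₄ y_u (edges x_u r₁, r₁ r₂, r₂ r₃, r₃ r₄, r₄ y_u), the path x_v r₅ r₆ r₇ r₈ y_v (edges x_v r₅, r₅ r₆, r₆ r₇, r₇ r₈, r₈ y_v), and the four cross edges x_v r₂, y_v r₃, x_u r₆, y_u r₇. Then R has no Hamiltonian path with one endpoint in {x_u, y_u} and the other endpoint in {x_v, y_v}. -/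
open SimpleGraph

/-!
The edges of a Hamiltonian path meet each of its two ends once and every other vertex twice,
so an inner vertex of degree two uses both of its edges. Starting at `x_u`, the inner vertices
`r₁`, `r₈`, `y_u` force the path edges `x_u r₁`, `r₇ r₈`, `y_u r₇`; hence neither `x_u r₆` nor
`r₆ r₇` is used and `r₆` keeps only the edge `r₅ r₆`. Starting at `y_u`, the mirror argument
leaves `r₇` with only the edge `r₇ r₈`.
-/

/-- The edges of the edge-gadget graph on twelve vertices, with the encoding
`0 = x_u`, `1 = y_u`, `2 = x_v`, `3 = y_v`, `4, …, 11 = r₁, …, r₈`. -/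
def gadgetEdges : List (Fin 12 × Fin 12) :=
  [(0, 4), (4, 5), (5, 6), (6, 7), (7, 1),
   (2, 8), (8, 9), (9, 10), (10, 11), (11, 3),
   (2, 5), (3, 6), (0, 9), (1, 10)]

/-- The edge-gadget graph `R`. -/
def gadgetGraph : SimpleGraph (Fin 12) :=
  SimpleGraph.fromRel (fun u w => (u, w) ∈ gadgetEdges)

namespace SimpleGraph

variable {V : Type*} {G : SimpleGraph V}

lemma Walk.IsPath.ncard_neighborSet_toSubgraph_start {u v : V} {p : G.Walk u v}
    (hp : p.IsPath) (huv : u ≠ v) : (p.toSubgraph.neighborSet u).ncard = 1 := by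
  rw [hp.neighborSet_toSubgraph_startpoint (Walk.not_nil_of_ne huv), Set.ncard_singleton]

lemma Walk.IsPath.ncard_neighborSet_toSubgraph_of_ne {u v w : V} {p : G.Walk u v}
    (hp : p.IsPath) (hw : w ∈ p.support) (hwu : w ≠ u) (hwv : w ≠ v) :
    (p.toSubgraph.neighborSet w).ncard = 2 := by
  obtain ⟨i, rfl, hi⟩ := Walk.mem_support_iff_exists_getVert.mp hw
  have hi0 : i ≠ 0 := by rintro rfl; exact hwu p.getVert_zero
  have hil : i ≠ p.length := by rintro rfl; exact hwv p.getVert_length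
  exact hp.ncard_neighborSet_toSubgraph_internal_eq_two hi0 (by omega)

namespace Subgraph

variable {H : G.Subgraph} {v a b c : V}

lemma adj_of_neighborSet_eq_pair (hG : G.neighborSet v = {a, b})
    (hH : (H.neighborSet v).ncard = 2) : H.Adj v a ∧ H.Adj v b := by
  have hsub : H.neighborSet v ⊆ {a, b} := hG ▸ H.neighborSet_subset v
  have heq : H.neighborSet v = {a, b} :=
    Set.eq_of_subset_of_ncard_le hsub
      (by simpa [hH] using Set.ncard_insert_le a {b}) (Set.toFinite _)
  show a ∈ H.neighborSet v ∧ b ∈ H.neighborSet v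
  simp [heq]

lemma neighborSet_eq_singleton_of_adj (ha : H.Adj v a) (hH : (H.neighborSet v).ncard = 1) :
    H.neighborSet v = {a} := by
  obtain ⟨x, hx⟩ := Set.ncard_eq_one.mp hH
  have hax : a ∈ H.neighborSet v := ha
  rw [hx, Set.mem_singleton_iff] at hax
  rw [hx, hax]

lemma neighborSet_eq_pair_of_adj (ha : H.Adj v a) (hb : H.Adj v b) (hab : a ≠ b)
    (hH : (H.neighborSet v).ncard = 2) : H.neighborSet v = {a, b} := by
  have hsub : {a, b} ⊆ H.neighborSet v := Set.insert_subset ha (Set.singleton_subset_iff.mpr hb)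
  refine (Set.eq_of_subset_of_ncard_le hsub ?_ (Set.finite_of_ncard_pos (by omega))).symm
  rw [hH, Set.ncard_pair hab]

lemma not_adj_of_neighborSet_eq {s : Set V} {w : V} (h : H.neighborSet v = s) (hw : w ∉ s) :
    ¬ H.Adj w v :=
  fun hwv ↦ hw (h ▸ hwv.symm)

lemma ncard_neighborSet_le_one_of_not_adj (hG : G.neighborSet v = {a, b, c})
    (hb : ¬ H.Adj v b) (hc : ¬ H.Adj v c) : (H.neighborSet v).ncard ≤ 1 := by
  have hsub : H.neighborSet v ⊆ {a} := by
    intro x hx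
    rcases (hG ▸ H.neighborSet_subset v hx : x ∈ ({a, b, c} : Set V)) with rfl | rfl | rfl
    · rfl
    · exact absurd hx hb
    · exact absurd hx hc
  simpa using Set.ncard_le_ncard hsub

end Subgraph

end SimpleGraph

lemma gadgetGraph_neighborSet_zero : gadgetGraph.neighborSet 0 = {4, 9} := by
  ext w; simp only [mem_neighborSet, gadgetGraph, fromRel_adj]; revert w; decide

lemma gadgetGraph_neighborSet_one : gadgetGraph.neighborSet 1 = {7, 10} := by
  ext w; simp only [mem_neighborSet, gadgetGraph, fromRel_adj]; revert w; decide

lemma gadgetGraph_neighborSet_four : gadgetGraph.neighborSet 4 = {0, 5} := by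
  ext w; simp only [mem_neighborSet, gadgetGraph, fromRel_adj]; revert w; decide

lemma gadgetGraph_neighborSet_seven : gadgetGraph.neighborSet 7 = {6, 1} := by
  ext w; simp only [mem_neighborSet, gadgetGraph, fromRel_adj]; revert w; decide

lemma gadgetGraph_neighborSet_eight : gadgetGraph.neighborSet 8 = {2, 9} := by
  ext w; simp only [mem_neighborSet, gadgetGraph, fromRel_adj]; revert w; decide

lemma gadgetGraph_neighborSet_nine : gadgetGraph.neighborSet 9 = {8, 10, 0} := by
  ext w; simp only [mem_neighborSet, gadgetGraph, fromRel_adj]; revert w; decide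

lemma gadgetGraph_neighborSet_ten : gadgetGraph.neighborSet 10 = {11, 9, 1} := by
  ext w; simp only [mem_neighborSet, gadgetGraph, fromRel_adj]; revert w; decide

lemma gadgetGraph_neighborSet_eleven : gadgetGraph.neighborSet 11 = {10, 3} := by
  ext w; simp only [mem_neighborSet, gadgetGraph, fromRel_adj]; revert w; decide

/-- The degrees that the edges of a Hamiltonian path of `gadgetGraph` from `s` to `x_v` or `y_v`
induce, whichever of the two it ends at. -/
def IsGadgetPathDegrees (H : gadgetGraph.Subgraph) (s : Fin 12) : Prop :=
  (H.neighborSet s).ncard = 1 ∧ ∀ w ∉ ({s, 2, 3} : Finset (Fin 12)), (H.neighborSet w).ncard = 2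

lemma SimpleGraph.Walk.IsPath.isGadgetPathDegrees {s t : Fin 12} {p : gadgetGraph.Walk s t}
    (hp : p.IsPath) (ht : t = 2 ∨ t = 3) (hst : s ≠ t) (hall : ∀ v, v ∈ p.support) :
    IsGadgetPathDegrees p.toSubgraph s := by
  refine ⟨hp.ncard_neighborSet_toSubgraph_start hst, fun w hw ↦ ?_⟩
  simp only [Finset.mem_insert, Finset.mem_singleton, not_or] at hw
  have hwt : w ≠ t := by rcases ht with rfl | rfl <;> tauto
  exact hp.ncard_neighborSet_toSubgraph_of_ne (hall w) hw.1 hwt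

open Subgraph in
lemma not_isGadgetPathDegrees_zero (H : gadgetGraph.Subgraph) :
    ¬ IsGadgetPathDegrees H 0 := by
  rintro ⟨hend, hinner⟩
  have h04 := (adj_of_neighborSet_eq_pair gadgetGraph_neighborSet_four
    (hinner 4 (by decide))).1.symm
  have h0 := neighborSet_eq_singleton_of_adj h04 hend
  have h10_11 := (adj_of_neighborSet_eq_pair gadgetGraph_neighborSet_eleven
    (hinner 11 (by decide))).1.symm
  have h10_1 := (adj_of_neighborSet_eq_pair gadgetGraph_neighborSet_one
    (hinner 1 (by decide))).2.symm
  have h10 := neighborSet_eq_pair_of_adj h10_11 h10_1 (by decide) (hinner 10 (by decide))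
  have h9le := ncard_neighborSet_le_one_of_not_adj gadgetGraph_neighborSet_nine
    (not_adj_of_neighborSet_eq h10 (by decide)) (not_adj_of_neighborSet_eq h0 (by decide))
  have h9two := hinner 9 (by decide)
  omega

open Subgraph in
lemma not_isGadgetPathDegrees_one (H : gadgetGraph.Subgraph) :
    ¬ IsGadgetPathDegrees H 1 := by
  rintro ⟨hend, hinner⟩
  have h17 := (adj_of_neighborSet_eq_pair gadgetGraph_neighborSet_seven
    (hinner 7 (by decide))).2.symm
  have h1 := neighborSet_eq_singleton_of_adj h17 hend
  have h90 := (adj_of_neighborSet_eq_pair gadgetGraph_neighborSet_zero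
    (hinner 0 (by decide))).2.symm
  have h98 := (adj_of_neighborSet_eq_pair gadgetGraph_neighborSet_eight
    (hinner 8 (by decide))).2.symm
  have h9 := neighborSet_eq_pair_of_adj h90 h98 (by decide) (hinner 9 (by decide))
  have h10le := ncard_neighborSet_le_one_of_not_adj gadgetGraph_neighborSet_ten
    (not_adj_of_neighborSet_eq h9 (by decide)) (not_adj_of_neighborSet_eq h1 (by decide))
  have h10two := hinner 10 (by decide)
  omega

/-- The edge-gadget graph has no Hamiltonian path from a vertex of `{x_u, y_u}`
to a vertex of `{x_v, y_v}`: there is no path visiting every vertex exactly once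
with one endpoint in `{0, 1}` and the other in `{2, 3}`. -/
theorem gadget_no_crossing_hamiltonian_path :
    ¬ ∃ (s t : Fin 12), (s = 0 ∨ s = 1) ∧ (t = 2 ∨ t = 3) ∧
      ∃ p : gadgetGraph.Walk s t, p.IsPath ∧ ∀ v : Fin 12, v ∈ p.support := by
  rintro ⟨s, t, hs, ht, p, hp, hall⟩
  have hst : s ≠ t := by rcases hs with rfl | rfl <;> rcases ht with rfl | rfl <;> decide
  have hdeg := hp.isGadgetPathDegrees ht hst hall
  rcases hs with rfl | rfl
  exacts [not_isGadgetPathDegrees_zero _ hdeg, not_isGadgetPathDegrees_one _ hdeg]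
end

section
/- Let G be a finite simple graph with vertex set {v₁, …, v_n} (n ≥ 1) and let G' be the graph on vertex set A ∪ B ∪ {x, y}, where A = {a₁, …, a_n}, B = {b_{i,t} : 1 ≤ i ≤ n, t ∈ {0,1}}, with edges: a_i is adjacent to b_{j,t} (for t ∈ {0,1}) if and only if v_j ∈ N_G[v_i]; x is adjacent to every vertex of A; and x is adjacent to y. Then for every spanning tree T of G', the set {v_i : a_i is an internal node of T} is a dominating set of G. -/
open SimpleGraph

/-- The graph `G'` built from `G`: vertex set `A ∪ B ∪ {x, y}` where
`A = {aᵢ : i ∈ V}` is encoded as `Sum.inl i`, `B = {b_{j,t}}` as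
`Sum.inr (Sum.inl (j, t))`, `x` as `Sum.inr (Sum.inr false)` and
`y` as `Sum.inr (Sum.inr true)`. The vertex `aᵢ` is adjacent to `b_{j,t}`
iff `v_j ∈ N_G[v_i]`, `x` is adjacent to every vertex of `A`, and `x` is
adjacent to `y`. -/
def Gprime {V : Type*} (G : SimpleGraph V) :
    SimpleGraph (V ⊕ (V × Bool) ⊕ Bool) :=
  SimpleGraph.fromRel (fun u w =>
    match u, w with
    | Sum.inl i, Sum.inr (Sum.inl (j, _)) => i = j ∨ G.Adj i j
    | Sum.inl _, Sum.inr (Sum.inr b) => b = false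
    | Sum.inr (Sum.inr false), Sum.inr (Sum.inr true) => True
    | _, _ => False)

/-!
Fix `w` and walk along the tree path from `b_{w,0}` to `x`. The vertices `b_{w,0}` and `x` are
not adjacent in `G'`, so the path has an interior vertex right after `b_{w,0}`; that vertex has
two distinct tree neighbours on the path, hence is internal, and as a neighbour of `b_{w,0}` in
`G'` it is some `a_d` with `v_d ∈ N_G[v_w]`.
-/

theorem mem_internalNodes_of_adj_of_adj {V : Type*} {T : SimpleGraph V} {v a b : V}
    (ha : T.Adj v a) (hb : T.Adj v b) (hab : a ≠ b) : v ∈ internalNodes T := by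
  intro h
  obtain ⟨c, hc⟩ := Set.ncard_eq_one.mp h
  have ha' : a ∈ T.neighborSet v := ha
  have hb' : b ∈ T.neighborSet v := hb
  rw [hc] at ha' hb'
  exact hab (ha'.trans hb'.symm)

theorem exists_adj_mem_internalNodes_of_preconnected {V : Type*} {T : SimpleGraph V}
    (hT : T.Preconnected) {u x : V} (hux : u ≠ x) (hnadj : ¬T.Adj u x) :
    ∃ v, T.Adj u v ∧ v ∈ internalNodes T := by
  classical
  obtain ⟨p, hp⟩ := (hT u x).some.toPath
  obtain ⟨v, huv, q, rfl⟩ := p.exists_eq_cons_of_ne hux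
  have hvx : v ≠ x := by rintro rfl; exact hnadj huv
  obtain ⟨v', hvv', r, rfl⟩ := q.exists_eq_cons_of_ne hvx
  have hv'u : v' ≠ u := by
    rintro rfl
    simp [Walk.cons_isPath_iff] at hp
  exact ⟨v, huv, mem_internalNodes_of_adj_of_adj huv.symm hvv' hv'u.symm⟩

theorem gprime_adj_inr_inl_iff {V : Type*} {G : SimpleGraph V} {w : V} {t : Bool}
    {u : V ⊕ (V × Bool) ⊕ Bool} :
    (Gprime G).Adj (Sum.inr (Sum.inl (w, t))) u ↔ ∃ d, u = Sum.inl d ∧ (d = w ∨ G.Adj d w) := by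
  rcases u with d | ⟨⟨j, s⟩⟩ | (_ | _) <;> simp [Gprime, eq_comm]

theorem internal_nodes_dominate_general
    {V : Type*} (G : SimpleGraph V)
    (T : SimpleGraph (V ⊕ (V × Bool) ⊕ Bool))
    (hT : IsSpanningTree (Gprime G) T) :
    ∀ w : V, ∃ d : V, Sum.inl d ∈ internalNodes T ∧ (d = w ∨ G.Adj d w) := by
  intro w
  obtain ⟨hle, htree⟩ := hT
  have hnadj : ¬T.Adj (Sum.inr (Sum.inl (w, false))) (Sum.inr (Sum.inr false)) := fun h => by
    simpa using gprime_adj_inr_inl_iff.mp (hle h)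
  obtain ⟨v, hbv, hv⟩ :=
    exists_adj_mem_internalNodes_of_preconnected htree.connected.preconnected (by simp) hnadj
  obtain ⟨d, rfl, hd⟩ := gprime_adj_inr_inl_iff.mp (hle hbv)
  exact ⟨d, hv, hd⟩

/-- For every spanning tree `T` of `G'`, the set of vertices of `G` whose `A`-copy is an
internal node of `T` is a dominating set of `G`. -/
theorem internal_nodes_dominate
    {V : Type*} [Fintype V] [Nonempty V] (G : SimpleGraph V)
    (T : SimpleGraph (V ⊕ (V × Bool) ⊕ Bool))
    (hT : IsSpanningTree (Gprime G) T) :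
    ∀ w : V, ∃ d : V, Sum.inl d ∈ internalNodes T ∧ (d = w ∨ G.Adj d w) :=
  internal_nodes_dominate_general G T hT
end

section
/- Let G be a finite simple graph with vertex set {v₁, …, v_n} (n ≥ 1) and let G' be the graph on vertex set A ∪ B ∪ {x, y}, where A = {a₁, …, a_n}, B = {b_{i,t} : 1 ≤ i ≤ n, t ∈ {0,1}}, with edges: a_i is adjacent to b_{j,t} (for t ∈ {0,1}) if and only if v_j ∈ N_G[v_i]; x is adjacent to every vertex of A; and x is adjacent to y. Then for every dominating set D of G, there exists a spanning tree T of G' whose set of internal nodes is contained in {x} ∪ {a_i : v_i ∈ D}; in particular T has at most |D| + 1 internal nodes. -/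
/-! For each vertex `v_j` pick a dominator `d j ∈ D`, with `d j = j` when `v_j ∈ D`. Hang `y` and
every `aᵢ` from `x`, and `b_{j,t}` from `a_{d j}`; these are edges of `G'` because
`v_{d j} ∈ N_G[v_j]`. A graph given by a parent map along which some rank strictly decreases is a
tree: every edge from a vertex to its parent is a bridge, cutting off the descendants of that
vertex. In it a non-root vertex is internal exactly when it has a child, so apart from `x` the
internal nodes are the `aᵢ` with `i` in the range of `d`, which is `D`. -/

open SimpleGraph

namespace SimpleGraph

variable {W : Type*} {p : W → W} {rank : W → ℕ}

/-- The roots are the fixed points of `p`; every other vertex `v` is joined to `p v`. -/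
def ofParent (p : W → W) : SimpleGraph W :=
  fromRel fun u v => p u = v

lemma ofParent_adj {u v : W} : (ofParent p).Adj u v ↔ u ≠ v ∧ (p u = v ∨ p v = u) :=
  fromRel_adj _ _ _

lemma ofParent_le_iff {H : SimpleGraph W} :
    ofParent p ≤ H ↔ ∀ v, p v ≠ v → H.Adj v (p v) := by
  refine ⟨fun h v hv => h (ofParent_adj.2 ⟨hv.symm, Or.inl rfl⟩), ?_⟩
  rintro h u v ⟨huv, rfl | rfl⟩
  · exact h u huv.symm
  · exact (h v huv).symm

lemma rank_iterate_le (hp : ∀ v, p v ≠ v → rank (p v) < rank v) (k : ℕ) (v : W) :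
    rank (p^[k] v) ≤ rank v := by
  induction k generalizing v with
  | zero => rfl
  | succ k ih =>
    refine (ih (p v)).trans ?_
    by_cases hv : p v = v
    · rw [hv]
    · exact (hp v hv).le

lemma iterate_succ_ne_self (hp : ∀ v, p v ≠ v → rank (p v) < rank v) {v : W} (hv : p v ≠ v)
    (k : ℕ) : p^[k + 1] v ≠ v := by
  intro h
  have := rank_iterate_le hp k (p v)
  rw [← Function.iterate_succ_apply, h] at this
  exact (hp v hv).not_ge this

lemma reachable_ofParent_of_forall_eq (hp : ∀ v, p v ≠ v → rank (p v) < rank v) {r : W}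
    (hr : ∀ v, p v = v → v = r) (v : W) : (ofParent p).Reachable v r := by
  induction h : rank v using Nat.strong_induction_on generalizing v with
  | _ n ih =>
    by_cases hv : p v = v
    · rw [hr v hv]
    · exact (ofParent_adj.2 ⟨Ne.symm hv, Or.inl rfl⟩).reachable.trans (ih _ (h ▸ hp v hv) _ rfl)

lemma isBridge_of_forall_adj_mem_notMem {G : SimpleGraph W} {S : Set W} {u v : W}
    (hu : u ∈ S) (hv : v ∉ S) (hS : ∀ a b, G.Adj a b → a ∈ S → b ∉ S → s(a, b) = s(u, v)) :
    G.IsBridge s(u, v) := by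
  rintro ⟨q⟩
  obtain ⟨⟨⟨a, b⟩, hab⟩, -, ha, hb⟩ := q.exists_boundary_dart S hu hv
  rw [deleteEdges_adj] at hab
  exact hab.2 (hS a b hab.1 ha hb)

lemma isAcyclic_ofParent (hp : ∀ v, p v ≠ v → rank (p v) < rank v) :
    (ofParent p).IsAcyclic := by
  rw [isAcyclic_iff_forall_adj_isBridge]
  suffices ∀ v, p v ≠ v → (ofParent p).IsBridge s(v, p v) by
    rintro u v ⟨huv, rfl | rfl⟩
    · exact this u huv.symm
    · rw [Sym2.eq_swap]; exact this v huv
  intro v hv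
  refine isBridge_of_forall_adj_mem_notMem (S := {u | ∃ k, p^[k] u = v}) ⟨0, rfl⟩
    (fun ⟨k, hk⟩ => iterate_succ_ne_self hp hv k hk) ?_
  rintro a b ⟨-, hpa | hpb⟩ ⟨k, hk⟩ hb
  · cases k with
    | zero => subst hk hpa; rfl
    | succ k => exact absurd ⟨k, by rwa [← hpa]⟩ hb
  · exact absurd ⟨k + 1, by rw [Function.iterate_succ_apply, hpb, hk]⟩ hb

lemma isTree_ofParent (hp : ∀ v, p v ≠ v → rank (p v) < rank v) {r : W}
    (hr : ∀ v, p v = v → v = r) : (ofParent p).IsTree :=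
  ⟨(connected_iff_exists_forall_reachable _).2
    ⟨r, fun v => (reachable_ofParent_of_forall_eq hp hr v).symm⟩, isAcyclic_ofParent hp⟩

lemma mem_internalNodes_ofParent_iff (hp : ∀ v, p v ≠ v → rank (p v) < rank v) {v : W}
    (hv : p v ≠ v) : v ∈ internalNodes (ofParent p) ↔ ∃ w, p w = v := by
  have hN : (ofParent p).neighborSet v = insert (p v) {w | p w = v} := by
    ext w
    simp only [mem_neighborSet, ofParent_adj, Set.mem_insert_iff, Set.mem_ofPred_eq]
    grind
  rw [internalNodes, Set.mem_ofPred_eq, hN, Ne, Set.ncard_eq_one, not_exists]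
  constructor
  · intro h
    by_contra! hleaf
    have hchildren : {w | p w = v} = ∅ := Set.eq_empty_of_forall_notMem hleaf
    exact h (p v) (by rw [hchildren, insert_empty_eq])
  · rintro ⟨w, hw⟩ a ha
    have hpv : p v ∈ ({a} : Set W) := ha ▸ Set.mem_insert _ _
    have hw' : w ∈ ({a} : Set W) := ha ▸ Set.mem_insert_of_mem _ hw
    rw [Set.mem_singleton_iff] at hpv hw'
    exact iterate_succ_ne_self hp hv 1 (show p (p v) = v by rw [hpv, ← hw', hw])

lemma exists_range_eq_and_forall_eq_or_adj {V : Type*} {G : SimpleGraph V} {D : Set V}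
    (hD : ∀ w, w ∈ D ∨ ∃ d ∈ D, G.Adj d w) :
    ∃ d : V → V, Set.range d = D ∧ ∀ w, d w = w ∨ G.Adj (d w) w := by
  have h : ∀ w, ∃ u ∈ D, (w ∈ D → u = w) ∧ (u = w ∨ G.Adj u w) := by
    intro w
    by_cases hw : w ∈ D
    · exact ⟨w, hw, fun _ => rfl, Or.inl rfl⟩
    · obtain ⟨u, hu, huw⟩ := (hD w).resolve_left hw
      exact ⟨u, hu, fun h => absurd h hw, Or.inr huw⟩
  choose d hdD hfix hadj using h
  exact ⟨d, (Set.range_subset_iff.2 hdD).antisymm fun w hw => ⟨w, hfix w hw⟩, hadj⟩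

end SimpleGraph

namespace Gprime

variable {V : Type*}

def treeParent (d : V → V) : V ⊕ (V × Bool) ⊕ Bool → V ⊕ (V × Bool) ⊕ Bool
  | Sum.inl _ => Sum.inr (Sum.inr false)
  | Sum.inr (Sum.inl (j, _)) => Sum.inl (d j)
  | Sum.inr (Sum.inr _) => Sum.inr (Sum.inr false)

def treeRank : V ⊕ (V × Bool) ⊕ Bool → ℕ
  | Sum.inl _ => 1
  | Sum.inr (Sum.inl _) => 2
  | Sum.inr (Sum.inr b) => b.toNat

lemma treeRank_treeParent_lt (d : V → V) :
    ∀ v, treeParent d v ≠ v → treeRank (treeParent d v) < treeRank v := by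
  rintro (i | ⟨j, t⟩ | (_ | _)) h <;> simp_all [treeParent, treeRank]

lemma eq_of_treeParent_eq_self (d : V → V) :
    ∀ v, treeParent d v = v → v = Sum.inr (Sum.inr false) := by
  rintro (i | ⟨j, t⟩ | (_ | _)) h <;> simp_all [treeParent]

lemma isTree_ofParent_treeParent (d : V → V) : (ofParent (treeParent d)).IsTree :=
  isTree_ofParent (treeRank_treeParent_lt d) (eq_of_treeParent_eq_self d)

lemma ofParent_treeParent_le {G : SimpleGraph V} {d : V → V}
    (hd : ∀ j, d j = j ∨ G.Adj (d j) j) : ofParent (treeParent d) ≤ Gprime G := by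
  rw [ofParent_le_iff]
  rintro (i | ⟨j, t⟩ | (_ | _)) h <;> simp_all [treeParent, Gprime]

lemma internalNodes_ofParent_treeParent_sdiff (d : V → V) :
    internalNodes (ofParent (treeParent d)) \ {Sum.inr (Sum.inr false)} =
      Sum.inl '' Set.range d := by
  ext v
  by_cases hv : treeParent d v = v
  · rw [eq_of_treeParent_eq_self d v hv]
    simp
  · rw [Set.mem_sdiff_singleton, mem_internalNodes_ofParent_iff (treeRank_treeParent_lt d) hv]
    rcases v with i | ⟨j, t⟩ | (_ | _) <;> simp_all [treeParent]

end Gprime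

theorem dominating_set_gives_spanning_tree_general
    {V : Type*} (G : SimpleGraph V)
    (D : Set V) (hD : ∀ w : V, w ∈ D ∨ ∃ d ∈ D, G.Adj d w) :
    ∃ T : SimpleGraph (V ⊕ (V × Bool) ⊕ Bool),
      IsSpanningTree (Gprime G) T ∧
      internalNodes T ⊆ insert (Sum.inr (Sum.inr false)) (Sum.inl '' D) ∧
      (internalNodes T).ncard ≤ D.ncard + 1 := by
  obtain ⟨d, hdD, hd⟩ := exists_range_eq_and_forall_eq_or_adj hD
  have hinternal := Gprime.internalNodes_ofParent_treeParent_sdiff d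
  rw [hdD] at hinternal
  refine ⟨ofParent (Gprime.treeParent d),
    ⟨Gprime.ofParent_treeParent_le hd, Gprime.isTree_ofParent_treeParent d⟩,
    hinternal ▸ Set.subset_insert_sdiff_singleton _ _, ?_⟩
  have hcard := Set.pred_ncard_le_ncard_sdiff_singleton
    (internalNodes (ofParent (Gprime.treeParent d))) (Sum.inr (Sum.inr false))
  rw [hinternal, Set.ncard_image_of_injective _ Sum.inl_injective] at hcard
  omega

/-- From every dominating set `D` of `G` one gets a spanning tree of `G'` whose internal
nodes are contained in `{x} ∪ {aᵢ : vᵢ ∈ D}`; in particular it has at most `|D| + 1`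
internal nodes. -/
theorem dominating_set_gives_spanning_tree
    {V : Type*} [Fintype V] [Nonempty V] (G : SimpleGraph V)
    (D : Set V) (hD : ∀ w : V, w ∈ D ∨ ∃ d ∈ D, G.Adj d w) :
    ∃ T : SimpleGraph (V ⊕ (V × Bool) ⊕ Bool),
      IsSpanningTree (Gprime G) T ∧
      internalNodes T ⊆ insert (Sum.inr (Sum.inr false)) (Sum.inl '' D) ∧
      (internalNodes T).ncard ≤ D.ncard + 1 :=
  dominating_set_gives_spanning_tree_general G D hD
end
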